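/- Let S_B and A_A, A_B be the symmetric and antisymmetric projectors as above, and for a unit vector ψ_{AB} ∈ ℂ^{d_A} ⊗ ℂ^{d_B} define the reduced toy-model state ω_A = Tr_B(S_B |ψ_{AB}⟩⟨ψ_{AB}|^{⊗2}) + (S_A/Tr S_A)·Tr(A_A ⊗ A_B |ψ_{AB}⟩⟨ψ_{AB}|^{⊗2}). Then Tr(ω_A) = 1 and ω_A is positive semidefinite. -/

import Mathlib

/-!
Write `P` for `|ψ⟩⟨ψ|^{⊗2}` read on `(ℂ^{d_A})^{⊗2} ⊗ (ℂ^{d_B})^{⊗2}`. Since `S_B` is an orthogonal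
projection, `Tr_B((1 ⊗ S_B) P) = Tr_B((1 ⊗ S_B) P (1 ⊗ S_B))` is a partial trace of a positive
operator, and the coefficient of `S_A` is `Tr((A_A ⊗ A_B) P (A_A ⊗ A_B)) / Tr S_A ≥ 0`; so `ω_A` is
positive semidefinite. For the trace, `1 ⊗ S_B + A_A ⊗ A_B + S_A ⊗ A_B = 1`, and
`(S_A ⊗ A_B) P = 0` because `P` is invariant under `SWAP_A ⊗ SWAP_B`, while `S_A SWAP_A = S_A`
and `A_B SWAP_B = -A_B`. Hence `Tr ω_A = Tr P = ‖ψ‖⁴ = 1`.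
-/

open Matrix BigOperators
open scoped Kronecker ComplexConjugate

noncomputable section

def swapMat (I : Type*) [DecidableEq I] [Fintype I] : Matrix (I × I) (I × I) ℂ :=
  fun p q => if p.1 = q.2 ∧ p.2 = q.1 then 1 else 0

def symProj (I : Type*) [DecidableEq I] [Fintype I] : Matrix (I × I) (I × I) ℂ :=
  (2⁻¹ : ℂ) • (1 + swapMat I)

def asymProj (I : Type*) [DecidableEq I] [Fintype I] : Matrix (I × I) (I × I) ℂ :=
  (2⁻¹ : ℂ) • (1 - swapMat I)

/-- reordering (1,2,3,4) ↦ (1,3,2,4) of tensor factors -/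
def reorder (A B : Type*) : ((A × B) × (A × B)) ≃ ((A × A) × (B × B)) where
  toFun x := ((x.1.1, x.2.1), (x.1.2, x.2.2))
  invFun y := ((y.1.1, y.2.1), (y.1.2, y.2.2))
  left_inv x := rfl
  right_inv y := rfl

/-- |ψ⟩⟨ψ| -/
def outer {I : Type*} (ψ : I → ℂ) : Matrix I I ℂ := fun i j => ψ i * conj (ψ j)

/-- ψ ⊗ ψ -/
def vec2 {I : Type*} (ψ : I → ℂ) : I × I → ℂ := fun p => ψ p.1 * ψ p.2

/-- |ψ⟩⟨ψ|^{⊗2} -/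
def pure2 {I : Type*} (ψ : I → ℂ) : Matrix (I × I) (I × I) ℂ := outer (vec2 ψ)

def unitVec {I : Type*} [Fintype I] (ψ : I → ℂ) : Prop := ∑ i, Complex.normSq (ψ i) = 1

/-- partial trace over the second factor -/
def ptraceB {A B : Type*} [Fintype B] (M : Matrix (A × B) (A × B) ℂ) : Matrix A A ℂ :=
  fun a a' => ∑ b, M (a, b) (a', b)

/-- reindex an operator on (ℂ^A ⊗ ℂ^B)^{⊗2} as an operator on (ℂ^A)^{⊗2} ⊗ (ℂ^B)^{⊗2} -/
def reindexAB {A B : Type*} (M : Matrix ((A × B) × (A × B)) ((A × B) × (A × B)) ℂ) :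
    Matrix ((A × A) × (B × B)) ((A × A) × (B × B)) ℂ :=
  M.submatrix (reorder A B).symm (reorder A B).symm

/-- the toy-model reduced state of a pure bipartite state -/
def toyReduced {dA dB : ℕ} (ψ : Fin dA × Fin dB → ℂ) :
    Matrix (Fin dA × Fin dA) (Fin dA × Fin dA) ℂ :=
  ptraceB (((1 : Matrix (Fin dA × Fin dA) (Fin dA × Fin dA) ℂ) ⊗ₖ symProj (Fin dB)) *
      reindexAB (pure2 ψ)) +
    (((asymProj (Fin dA) ⊗ₖ asymProj (Fin dB)) * reindexAB (pure2 ψ)).trace /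
        (symProj (Fin dA)).trace) • symProj (Fin dA)

open scoped ComplexOrder

section Projectors

variable {I : Type*} [DecidableEq I] [Fintype I]

lemma swapMat_mul_apply {n : Type*} (M : Matrix (I × I) n ℂ) (p : I × I) (q : n) :
    (swapMat I * M) p q = M p.swap q := by
  rw [mul_apply, Fintype.sum_eq_single p.swap]
  · simp [swapMat]
  · intro r hr
    simp only [swapMat, ite_mul, one_mul, zero_mul, ite_eq_right_iff, and_imp]
    intro h1 h2
    exact absurd (Prod.ext h2.symm h1.symm) hr

lemma swapMat_mul_self : swapMat I * swapMat I = 1 := by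
  ext p q
  rw [swapMat_mul_apply, swapMat, one_apply]
  simp only [Prod.ext_iff, Prod.fst_swap, Prod.snd_swap]
  exact if_congr ⟨fun ⟨h1, h2⟩ => ⟨h2, h1⟩, fun ⟨h1, h2⟩ => ⟨h2, h1⟩⟩ rfl rfl

lemma isSelfAdjoint_swapMat : IsSelfAdjoint (swapMat I) := by
  ext p q
  simp only [star_apply, swapMat, apply_ite star, star_one, star_zero]
  exact if_congr ⟨fun ⟨h1, h2⟩ => ⟨h2.symm, h1.symm⟩, fun ⟨h1, h2⟩ => ⟨h2.symm, h1.symm⟩⟩ rfl rfl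

lemma symProj_add_asymProj : symProj I + asymProj I = 1 := by
  simp only [symProj, asymProj, ← smul_add, add_add_sub_cancel]
  rw [← two_smul ℂ, smul_smul, inv_mul_cancel₀ two_ne_zero, one_smul]

lemma symProj_mul_swapMat : symProj I * swapMat I = symProj I := by
  rw [symProj, smul_mul, add_mul, one_mul, swapMat_mul_self, add_comm]

lemma asymProj_mul_swapMat : asymProj I * swapMat I = -asymProj I := by
  rw [asymProj, smul_mul, sub_mul, one_mul, swapMat_mul_self, ← smul_neg, neg_sub]

lemma isStarProjection_symProj : IsStarProjection (symProj I) where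
  isIdempotentElem := by
    rw [IsIdempotentElem]
    nth_rewrite 2 [symProj]
    rw [Matrix.mul_smul, mul_add, mul_one, symProj_mul_swapMat, ← two_smul ℂ (symProj I),
      smul_smul, inv_mul_cancel₀ two_ne_zero, one_smul]
  isSelfAdjoint := by
    simp [symProj, IsSelfAdjoint, isSelfAdjoint_swapMat.star_eq]

lemma isStarProjection_asymProj : IsStarProjection (asymProj I) := by
  rw [eq_sub_of_add_eq' symProj_add_asymProj]
  exact isStarProjection_symProj.one_sub

lemma trace_swapMat : (swapMat I).trace = Fintype.card I := by
  have h (a b : I) : (a = b ∧ b = a) ↔ a = b := ⟨And.left, fun h => ⟨h, h.symm⟩⟩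
  simp only [trace, diag, swapMat, Fintype.sum_prod_type, h]
  simp

lemma trace_symProj : (symProj I).trace = (Fintype.card I : ℂ) * (Fintype.card I + 1) / 2 := by
  rw [symProj, trace_smul, trace_add, trace_one, trace_swapMat, Fintype.card_prod]
  push_cast
  ring

end Projectors

section Operators

variable {m n : Type*} [Fintype n]

lemma IsStarProjection.kronecker [Fintype m] {P : Matrix m m ℂ} {Q : Matrix n n ℂ}
    (hP : IsStarProjection P) (hQ : IsStarProjection Q) :
    IsStarProjection (P ⊗ₖ Q) where
  isIdempotentElem := by
    rw [IsIdempotentElem, ← mul_kronecker_mul, hP.isIdempotentElem.eq, hQ.isIdempotentElem.eq]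
  isSelfAdjoint := by
    rw [IsSelfAdjoint, star_eq_conjTranspose, conjTranspose_kronecker, ← star_eq_conjTranspose,
      ← star_eq_conjTranspose, hP.isSelfAdjoint.star_eq, hQ.isSelfAdjoint.star_eq]

lemma IsStarProjection.posSemidef {P : Matrix n n ℂ} (hP : IsStarProjection P) : P.PosSemidef := by
  simpa only [← star_eq_conjTranspose, hP.isSelfAdjoint.star_eq, hP.isIdempotentElem.eq]
    using posSemidef_conjTranspose_mul_self P

lemma IsStarProjection.trace_mul_nonneg {P M : Matrix n n ℂ} (hP : IsStarProjection P)
    (hM : M.PosSemidef) : 0 ≤ (P * M).trace := by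
  have hPM : (P * M).trace = (Pᴴ * M * P).trace := by
    rw [← star_eq_conjTranspose, hP.isSelfAdjoint.star_eq, trace_mul_cycle, hP.isIdempotentElem.eq]
  rw [hPM]
  exact (hM.conjTranspose_mul_mul_same P).trace_nonneg

lemma ptraceB_eq_sum_submatrix (M : Matrix (m × n) (m × n) ℂ) :
    ptraceB M = ∑ b, M.submatrix (·, b) (·, b) := by
  ext a a'
  simp [ptraceB, Matrix.sum_apply]

lemma Matrix.PosSemidef.ptraceB {M : Matrix (m × n) (m × n) ℂ} (hM : M.PosSemidef) :
    (ptraceB M).PosSemidef := by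
  rw [ptraceB_eq_sum_submatrix]
  exact posSemidef_sum _ fun b _ => hM.submatrix _

lemma trace_ptraceB [Fintype m] (M : Matrix (m × n) (m × n) ℂ) : (ptraceB M).trace = M.trace := by
  simp [ptraceB, trace, Fintype.sum_prod_type]

lemma ptraceB_one_kronecker_mul [Fintype m] [DecidableEq m] (Q : Matrix n n ℂ)
    (M : Matrix (m × n) (m × n) ℂ) :
    ptraceB ((1 ⊗ₖ Q) * M) = ptraceB (M * (1 ⊗ₖ Q)) := by
  ext a a'
  simp only [ptraceB, mul_apply, kroneckerMap_apply, one_apply, ite_mul, one_mul, zero_mul,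
    Fintype.sum_prod_type, Finset.sum_ite_irrel, Finset.sum_const_zero, Finset.sum_ite_eq,
    Finset.mem_univ, ↓reduceIte, mul_ite, mul_zero, Finset.sum_ite_eq']
  rw [Finset.sum_comm]
  exact Fintype.sum_congr _ _ fun c => Fintype.sum_congr _ _ fun b => mul_comm _ _

lemma IsStarProjection.posSemidef_ptraceB_one_kronecker_mul [Fintype m] [DecidableEq m]
    {Q : Matrix n n ℂ} (hQ : IsStarProjection Q) {M : Matrix (m × n) (m × n) ℂ}
    (hM : M.PosSemidef) :
    (ptraceB ((1 ⊗ₖ Q) * M)).PosSemidef := by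
  have hQ' := (IsStarProjection.one (R := Matrix m m ℂ)).kronecker hQ
  have h : ptraceB ((1 ⊗ₖ Q) * M) = ptraceB ((1 ⊗ₖ Q)ᴴ * M * (1 ⊗ₖ Q)) := by
    rw [← star_eq_conjTranspose, hQ'.isSelfAdjoint.star_eq, ← ptraceB_one_kronecker_mul,
      ← mul_assoc, hQ'.isIdempotentElem.eq]
  rw [h]
  exact (hM.conjTranspose_mul_mul_same _).ptraceB

end Operators

section TwoCopies

variable {I : Type*} [Fintype I]

lemma posSemidef_pure2 (ψ : I → ℂ) : (pure2 ψ).PosSemidef :=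
  posSemidef_vecMulVec_self_star (vec2 ψ)

lemma trace_pure2 (ψ : I → ℂ) : (pure2 ψ).trace = ((∑ i, Complex.normSq (ψ i)) ^ 2 : ℝ) := by
  simp only [trace, diag, pure2, outer, vec2, Complex.mul_conj, Fintype.sum_prod_type]
  push_cast
  simp only [Complex.normSq_mul, sq, Finset.sum_mul_sum]
  push_cast
  rfl

lemma swapMat_mul_pure2 [DecidableEq I] (ψ : I → ℂ) : swapMat I * pure2 ψ = pure2 ψ := by
  ext p q
  rw [swapMat_mul_apply]
  simp only [pure2, outer, vec2, Prod.fst_swap, Prod.snd_swap, mul_comm (ψ p.2)]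

variable {A B : Type*} [Fintype A] [Fintype B]

lemma reindexAB_mul (M N : Matrix ((A × B) × (A × B)) ((A × B) × (A × B)) ℂ) :
    reindexAB (M * N) = reindexAB M * reindexAB N :=
  (submatrix_mul_equiv M N _ _ _).symm

lemma trace_reindexAB (M : Matrix ((A × B) × (A × B)) ((A × B) × (A × B)) ℂ) :
    (reindexAB M).trace = M.trace :=
  (reorder A B).symm.sum_comp fun x => M x x

lemma reindexAB_swapMat [DecidableEq A] [DecidableEq B] :
    reindexAB (swapMat (A × B)) = swapMat A ⊗ₖ swapMat B := by
  ext ⟨⟨a₁, a₂⟩, b₁, b₂⟩ ⟨⟨a₁', a₂'⟩, b₁', b₂'⟩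
  simp only [reindexAB, reorder, Equiv.symm_mk, Equiv.coe_fn_mk, submatrix_apply, swapMat,
    Prod.ext_iff, ite_and, kroneckerMap_apply, mul_ite, mul_one, mul_zero]
  split_ifs <;> simp_all

lemma symProj_kronecker_asymProj_mul_reindexAB_pure2 [DecidableEq A] [DecidableEq B]
    (ψ : A × B → ℂ) : (symProj A ⊗ₖ asymProj B) * reindexAB (pure2 ψ) = 0 := by
  set X := (symProj A ⊗ₖ asymProj B) * reindexAB (pure2 ψ)
  have hX : X = -X := calc
    X = (symProj A ⊗ₖ asymProj B) * (swapMat A ⊗ₖ swapMat B) * reindexAB (pure2 ψ) := by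
      rw [mul_assoc, ← reindexAB_swapMat, ← reindexAB_mul, swapMat_mul_pure2]
    _ = -X := by
      rw [← mul_kronecker_mul, symProj_mul_swapMat, asymProj_mul_swapMat, ← neg_one_smul ℂ,
        kronecker_smul, smul_mul_assoc, neg_one_smul]
  ext i j
  exact self_eq_neg.mp (congrFun₂ hX i j)

end TwoCopies

lemma one_kronecker_symProj_add_asymProj_kronecker_asymProj (A B : Type*) [DecidableEq A]
    [Fintype A] [DecidableEq B] [Fintype B] :
    (1 : Matrix (A × A) (A × A) ℂ) ⊗ₖ symProj B + asymProj A ⊗ₖ asymProj B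
      + symProj A ⊗ₖ asymProj B = 1 := by
  rw [add_assoc, ← add_kronecker, add_comm (asymProj A), symProj_add_asymProj, ← kronecker_add,
    symProj_add_asymProj, one_kronecker_one]

lemma unitVec.nonempty {I : Type*} [Fintype I] {ψ : I → ℂ} (hψ : unitVec ψ) : Nonempty I := by
  by_contra h
  rw [not_nonempty_iff] at h
  simp [unitVec] at hψ

lemma trace_toyReduced {dA dB : ℕ} {ψ : Fin dA × Fin dB → ℂ} (hψ : unitVec ψ) :
    (toyReduced ψ).trace = 1 := by
  have : Nonempty (Fin dA) := (unitVec.nonempty hψ).map Prod.fst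
  have hS : (symProj (Fin dA)).trace ≠ 0 := by
    rw [trace_symProj]
    have := Fintype.card_ne_zero (α := Fin dA)
    positivity
  set P := reindexAB (pure2 ψ)
  calc (toyReduced ψ).trace
      = ((1 ⊗ₖ symProj (Fin dB)) * P).trace + ((asymProj (Fin dA) ⊗ₖ asymProj (Fin dB)) * P).trace
        + ((symProj (Fin dA) ⊗ₖ asymProj (Fin dB)) * P).trace := by
        rw [symProj_kronecker_asymProj_mul_reindexAB_pure2, trace_zero, add_zero, toyReduced,
          trace_add, trace_smul, smul_eq_mul, div_mul_cancel₀ _ hS, trace_ptraceB]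
    _ = P.trace := by
        rw [← trace_add, ← trace_add, ← add_mul, ← add_mul,
          one_kronecker_symProj_add_asymProj_kronecker_asymProj, one_mul]
    _ = 1 := by
        rw [trace_reindexAB, trace_pure2, hψ]
        norm_num

lemma posSemidef_toyReduced {dA dB : ℕ} (ψ : Fin dA × Fin dB → ℂ) :
    (toyReduced ψ).PosSemidef := by
  have hP : (reindexAB (pure2 ψ)).PosSemidef := (posSemidef_pure2 ψ).submatrix _
  refine (isStarProjection_symProj.posSemidef_ptraceB_one_kronecker_mul hP).add
    (isStarProjection_symProj.posSemidef.smul (div_nonneg ?_ ?_))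
  · exact (isStarProjection_asymProj.kronecker isStarProjection_asymProj).trace_mul_nonneg hP
  · exact isStarProjection_symProj.posSemidef.trace_nonneg

open scoped ComplexOrder in
theorem stmt_16 (dA dB : ℕ) (ψ : Fin dA × Fin dB → ℂ) (hψ : unitVec ψ) :
    (toyReduced ψ).trace = 1 ∧ (toyReduced ψ).PosSemidef :=
  ⟨trace_toyReduced hψ, posSemidef_toyReduced ψ⟩
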